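/- Let g : ℕ → ℕ be monotone (nondecreasing) with g(b) ≥ b+1 for all b, let b ≥ 1, and let α be an ordinal below ε₀. Then g^{ω^α}(b) > g^α(b). -/

import Mathlib

open Ordinal

noncomputable def eps0 : Ordinal.{0} := Ordinal.nfp (fun a => Ordinal.omega0 ^ a) 0

/-- Rebuild an ordinal from a list of (exponent, coefficient) pairs. -/
noncomputable def ofCNF (L : List (Ordinal.{0} × Ordinal.{0})) : Ordinal.{0} :=
  L.foldr (fun p r => Ordinal.omega0 ^ p.1 * p.2 + r) 0

open scoped Classical in
/-- The fundamental-sequence approximation `α[x]`. -/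
noncomputable def fundSeq (x : ℕ) : Ordinal.{0} → Ordinal.{0} :=
  WellFounded.fix Ordinal.lt_wf (fun α IH =>
    if hα : α = 0 then 0
    else
      match hL : (Ordinal.CNF Ordinal.omega0 α).getLast? with
      | none => 0
      | some p =>
        if p.1 = 0 then Ordinal.pred α
        else if h : p.1 < α then
          ofCNF ((Ordinal.CNF Ordinal.omega0 α).dropLast
            ++ [(p.1, p.2 - 1), (IH p.1 h, (x : Ordinal))])
        else 0)

open scoped Classical in
/-- Transfinite iterates `g^α` of `g : ℕ → ℕ`, defined by `g^0(b) = b` and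
`g^α(b) = g^{α[b]}(g b)`. -/
noncomputable def iterOrd (g : ℕ → ℕ) : Ordinal.{0} → ℕ → ℕ :=
  WellFounded.fix Ordinal.lt_wf (fun α IH => fun b =>
    if hα : α = 0 then b
    else if h : fundSeq b α < α then IH (fundSeq b α) h (g b)
    else 0)

open scoped Classical in
/-- The coordinate bound `|α|`: the maximum of all coefficients and (hereditarily)
exponent-bounds appearing in the Cantor normal form of `α`. -/
noncomputable def coordBound : Ordinal.{0} → ℕ :=
  WellFounded.fix Ordinal.lt_wf (fun α IH =>
    ((Ordinal.CNF Ordinal.omega0 α).map (fun p =>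
      max (p.2.card.toNat) (if h : p.1 < α then IH p.1 h else 0))).foldr max 0)
section Part1
open scoped Classical
open Ordinal List

lemma fundSeq_def (x : ℕ) (α : Ordinal.{0}) :
    fundSeq x α =
      if hα : α = 0 then 0
      else
        match hL : (Ordinal.CNF Ordinal.omega0 α).getLast? with
        | none => 0
        | some p =>
          if p.1 = 0 then Ordinal.pred α
          else if h : p.1 < α then
            ofCNF ((Ordinal.CNF Ordinal.omega0 α).dropLast
              ++ [(p.1, p.2 - 1), (fundSeq x p.1, (x : Ordinal))])
          else 0 := by
  conv_lhs => rw [fundSeq, WellFounded.fix_eq]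
  rfl

lemma iterOrd_def (g : ℕ → ℕ) (α : Ordinal.{0}) (b : ℕ) :
    iterOrd g α b =
      if α = 0 then b
      else if fundSeq b α < α then iterOrd g (fundSeq b α) (g b)
      else 0 := by
  conv_lhs => rw [iterOrd, WellFounded.fix_eq]
  rfl

lemma ne_zero_of_getLast {α : Ordinal.{0}} {p} (hp : (Ordinal.CNF ω α).getLast? = some p) :
    α ≠ 0 := by
  rintro rfl
  rw [Ordinal.CNF.zero_right ω] at hp
  simp at hp

lemma fundSeq_last_zero (x : ℕ) {α : Ordinal.{0}} {p} (hp : (Ordinal.CNF ω α).getLast? = some p)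
    (h1 : p.1 = 0) : fundSeq x α = Ordinal.pred α := by
  rw [fundSeq_def, dif_neg (ne_zero_of_getLast hp)]
  split
  · rename_i heq; rw [hp] at heq; cases heq
  · rename_i p' heq; rw [hp] at heq
    cases heq
    rw [if_pos h1]

lemma fundSeq_last_pos (x : ℕ) {α : Ordinal.{0}} {p} (hp : (Ordinal.CNF ω α).getLast? = some p)
    (h1 : p.1 ≠ 0) (h2 : p.1 < α) :
    fundSeq x α = ofCNF ((Ordinal.CNF ω α).dropLast
      ++ [(p.1, p.2 - 1), (fundSeq x p.1, (x : Ordinal))]) := by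
  rw [fundSeq_def, dif_neg (ne_zero_of_getLast hp)]
  split
  · rename_i heq; rw [hp] at heq; cases heq
  · rename_i p' heq; rw [hp] at heq
    cases heq
    rw [if_neg h1, dif_pos h2]

lemma fundSeq_last_pos_not (x : ℕ) {α : Ordinal.{0}} {p} (hp : (Ordinal.CNF ω α).getLast? = some p)
    (h1 : p.1 ≠ 0) (h2 : ¬ p.1 < α) : fundSeq x α = 0 := by
  rw [fundSeq_def, dif_neg (ne_zero_of_getLast hp)]
  split
  · rename_i heq; rw [hp] at heq
  · rename_i p' heq; rw [hp] at heq
    cases heq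
    rw [if_neg h1, dif_neg h2]

end Part1
section Part2
open scoped Classical
open Ordinal List

lemma ofCNF_nil : ofCNF [] = 0 := rfl

lemma ofCNF_cons (p : Ordinal.{0} × Ordinal.{0}) (L) :
    ofCNF (p :: L) = ω ^ p.1 * p.2 + ofCNF L := rfl

lemma ofCNF_append (L M : List (Ordinal.{0} × Ordinal.{0})) :
    ofCNF (L ++ M) = L.foldr (fun p r => ω ^ p.1 * p.2 + r) (ofCNF M) := by
  simp [ofCNF, List.foldr_append]

lemma ofCNF_CNF (α : Ordinal.{0}) : ofCNF (Ordinal.CNF ω α) = α := Ordinal.CNF.foldr ω α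

lemma omega0_opow_eps0 : ω ^ eps0 = eps0 :=
  Ordinal.nfp_fp (Ordinal.isNormal_opow one_lt_omega0) 0

lemma opow_lt_eps0 {a : Ordinal.{0}} (h : a < eps0) : ω ^ a < eps0 := by
  conv_rhs => rw [← omega0_opow_eps0]
  exact (Ordinal.opow_lt_opow_iff_right one_lt_omega0).2 h

lemma lt_opow_self_of_lt_eps0 {a : Ordinal.{0}} (h : a < eps0) : a < ω ^ a := by
  by_contra hc
  push_neg at hc
  exact h.not_ge (Ordinal.nfp_le_fp
    (fun x y hxy => Ordinal.opow_le_opow_right omega0_pos hxy) (zero_le (a := a)) hc)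

lemma log_lt_self_of_lt_eps0 {a : Ordinal.{0}} (h0 : a ≠ 0) (h : a < eps0) :
    Ordinal.log ω a < a := by
  rcases lt_or_eq_of_le (Ordinal.log_le_self ω a) with h1 | h1
  · exact h1
  · have h2 : ω ^ a ≤ a := by
      conv_lhs => rw [← h1]
      exact Ordinal.opow_log_le_self ω h0
    exact absurd h2 (lt_opow_self_of_lt_eps0 h).not_ge

lemma CNF_snd_eq_nat {α : Ordinal.{0}} {p : Ordinal.{0} × Ordinal.{0}}
    (hp : p ∈ Ordinal.CNF ω α) : ∃ k : ℕ, p.2 = ((k + 1 : ℕ) : Ordinal) := by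
  have h1 := Ordinal.CNF.snd_pos hp
  have h2 := Ordinal.CNF.snd_lt one_lt_omega0 hp
  rcases Ordinal.lt_omega0.1 h2 with ⟨n, hn⟩
  cases n with
  | zero => rw [hn] at h1; simp at h1
  | succ k => exact ⟨k, hn⟩

lemma natCast_succ_sub_one (k : ℕ) : (((k + 1 : ℕ) : Ordinal)) - 1 = (k : Ordinal) := by
  have h := Ordinal.natCast_sub (k + 1) 1
  simp only [Nat.add_sub_cancel, Nat.cast_one] at h
  exact h.symm

lemma foldr_lt {L : List (Ordinal.{0} × Ordinal.{0})} {s t : Ordinal.{0}} (h : s < t) :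
    L.foldr (fun p r => ω ^ p.1 * p.2 + r) s < L.foldr (fun p r => ω ^ p.1 * p.2 + r) t := by
  induction L with
  | nil => exact h
  | cons a L ih => exact add_lt_add_right ih _

lemma foldr_succ (L : List (Ordinal.{0} × Ordinal.{0})) (s : Ordinal.{0}) :
    L.foldr (fun p r => ω ^ p.1 * p.2 + r) (s + 1)
      = L.foldr (fun p r => ω ^ p.1 * p.2 + r) s + 1 := by
  induction L with
  | nil => rfl
  | cons a L ih => simp only [List.foldr_cons, ih, add_assoc]

lemma CNF_split {α : Ordinal.{0}} {p} (hp : (Ordinal.CNF ω α).getLast? = some p) :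
    (Ordinal.CNF ω α).dropLast ++ [p] = Ordinal.CNF ω α := by
  have hne : Ordinal.CNF ω α ≠ [] := by
    intro h; rw [h] at hp; simp at hp
  have hg : (Ordinal.CNF ω α).getLast hne = p := by
    rw [List.getLast?_eq_getLast hne] at hp
    exact Option.some.inj hp
  have := List.dropLast_concat_getLast hne
  rwa [hg] at this

lemma exists_succ_of_last_zero {α : Ordinal.{0}} {p}
    (hp : (Ordinal.CNF ω α).getLast? = some p) (h1 : p.1 = 0) :
    ∃ s : Ordinal.{0}, α = s + 1 := by
  obtain ⟨k, hk⟩ := CNF_snd_eq_nat (List.mem_of_getLast? hp)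
  have hα : α = ofCNF ((Ordinal.CNF ω α).dropLast ++ [p]) := by
    rw [CNF_split hp, ofCNF_CNF]
  have hop : ofCNF [p] = (k : Ordinal) + 1 := by
    simp [ofCNF, h1, hk]
  refine ⟨(Ordinal.CNF ω α).dropLast.foldr (fun p r => ω ^ p.1 * p.2 + r) (k : Ordinal), ?_⟩
  conv_lhs => rw [hα]
  rw [ofCNF_append, hop, foldr_succ]

lemma fundSeq_lt (x : ℕ) : ∀ α : Ordinal.{0}, α ≠ 0 → fundSeq x α < α := by
  intro α
  induction α using Ordinal.induction with
  | h α IH =>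
    intro h0
    have hpos : (0 : Ordinal) < α := pos_iff_ne_zero.2 h0
    cases hL : (Ordinal.CNF ω α).getLast? with
    | none =>
      rw [fundSeq_def, dif_neg h0]
      split
      · exact hpos
      · rename_i p' heq; rw [hL] at heq; cases heq
    | some p =>
      by_cases h1 : p.1 = 0
      · rw [fundSeq_last_zero x hL h1]
        obtain ⟨s, hs⟩ := exists_succ_of_last_zero hL h1
        rw [hs, add_one_eq_succ, Ordinal.pred_succ]
        exact Order.lt_succ s
      · by_cases h2 : p.1 < α
        · rw [fundSeq_last_pos x hL h1 h2]
          obtain ⟨k, hk⟩ := CNF_snd_eq_nat (List.mem_of_getLast? hL)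
          have hq : fundSeq x p.1 < p.1 := IH p.1 h2 h1
          have hkey : ω ^ (fundSeq x p.1) * (x : Ordinal) < ω ^ p.1 := by
            calc ω ^ (fundSeq x p.1) * (x : Ordinal)
                < ω ^ (fundSeq x p.1) * ω :=
                  (mul_lt_mul_iff_right₀ (Ordinal.opow_pos _ omega0_pos)).2
                    (Ordinal.nat_lt_omega0 x)
              _ = ω ^ (Order.succ (fundSeq x p.1)) := (Ordinal.opow_succ ω _).symm
              _ ≤ ω ^ p.1 :=
                  Ordinal.opow_le_opow_right omega0_pos (Order.succ_le_of_lt hq)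
          have hcore : ofCNF [(p.1, p.2 - 1), (fundSeq x p.1, (x : Ordinal))] < ofCNF [p] := by
            simp only [ofCNF_cons, ofCNF_nil, add_zero]
            rw [hk, natCast_succ_sub_one]
            calc ω ^ p.1 * (k : Ordinal) + ω ^ (fundSeq x p.1) * (x : Ordinal)
                < ω ^ p.1 * (k : Ordinal) + ω ^ p.1 := add_lt_add_right hkey _
              _ = ω ^ p.1 * ((k : Ordinal) + 1) := by rw [mul_add, mul_one]
              _ = ω ^ p.1 * ((k + 1 : ℕ) : Ordinal) := by norm_cast
          conv_rhs => rw [← ofCNF_CNF α, ← CNF_split hL]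
          rw [ofCNF_append, ofCNF_append]
          exact foldr_lt hcore
        · rw [fundSeq_last_pos_not x hL h1 h2]
          exact hpos

end Part2
section Part3
open scoped Classical
open Ordinal List

lemma CNF_opow_mul {α c : Ordinal.{0}} (hc0 : c ≠ 0) (hc : c < ω) :
    Ordinal.CNF ω (ω ^ α * c) = [(α, c)] := by
  have hω : ω ^ α ≠ 0 := Ordinal.opow_ne_zero α omega0_ne_zero
  have h0 : ω ^ α * c ≠ 0 := _root_.mul_ne_zero hω hc0
  have hlog : Ordinal.log ω (ω ^ α * c) = α := by
    rw [Ordinal.log_opow_mul one_lt_omega0 α hc0, Ordinal.log_eq_zero hc, add_zero]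
  have hmod : (ω ^ α * c) % ω ^ α = 0 := by
    have := Ordinal.mul_add_mod_self (ω ^ α) c 0
    simpa using this
  rw [Ordinal.CNF.ne_zero h0, hlog, Ordinal.mul_div_cancel c hω, hmod, Ordinal.CNF.zero_right ω]

lemma CNF_opow_mul_add {α m δ : Ordinal.{0}} (hm0 : m ≠ 0) (hmω : m < ω) (hδ0 : δ ≠ 0) (hδ : δ < ω ^ α) :
    Ordinal.CNF ω (ω ^ α * m + δ) = (α, m) :: Ordinal.CNF ω δ := by
  have hω : ω ^ α ≠ 0 := Ordinal.opow_ne_zero α omega0_ne_zero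
  have h0 : ω ^ α * m + δ ≠ 0 := by
    have : (0 : Ordinal) < δ := pos_iff_ne_zero.2 hδ0
    exact (lt_of_lt_of_le this (le_add_self)).ne'
  have hlog : Ordinal.log ω (ω ^ α * m + δ) = α := by
    rw [Ordinal.log_opow_mul_add one_lt_omega0 hm0 hδ, Ordinal.log_eq_zero hmω, add_zero]
  rw [Ordinal.CNF.ne_zero h0, hlog, Ordinal.mul_add_div m hω δ,
    Ordinal.div_eq_zero_of_lt hδ, add_zero, Ordinal.mul_add_mod_self,
    Ordinal.mod_eq_of_lt hδ]

lemma fundSeq_opow (x : ℕ) {α : Ordinal.{0}} (h0 : α ≠ 0) (hα : α < eps0) :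
    fundSeq x (ω ^ α) = ω ^ (fundSeq x α) * (x : Ordinal) := by
  have hc : Ordinal.CNF ω (ω ^ α) = [(α, 1)] := by
    have := CNF_opow_mul (α := α) one_ne_zero one_lt_omega0
    rwa [mul_one] at this
  have hp : (Ordinal.CNF ω (ω ^ α)).getLast? = some (α, 1) := by rw [hc]; rfl
  rw [fundSeq_last_pos x hp h0 (lt_opow_self_of_lt_eps0 hα), hc]
  simp [ofCNF_cons, ofCNF_nil, Ordinal.sub_self]

lemma fundSeq_natCast (x : ℕ) (n : ℕ) : fundSeq x ((n + 1 : ℕ) : Ordinal) = (n : Ordinal) := by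
  have hc : Ordinal.CNF ω ((n + 1 : ℕ) : Ordinal) = [(0, ((n + 1 : ℕ) : Ordinal))] :=
    Ordinal.CNF.of_lt (Nat.cast_ne_zero.2 (Nat.succ_ne_zero n)) (Ordinal.nat_lt_omega0 _)
  have hp : (Ordinal.CNF ω ((n + 1 : ℕ) : Ordinal)).getLast?
      = some (0, ((n + 1 : ℕ) : Ordinal)) := by rw [hc]; rfl
  rw [fundSeq_last_zero x hp rfl, Nat.cast_succ, add_one_eq_succ, Ordinal.pred_succ]

lemma fundSeq_add (x : ℕ) {α : Ordinal.{0}} (hα : α < eps0) (m : ℕ) (hm : m ≠ 0)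
    {δ : Ordinal.{0}} (hδ0 : δ ≠ 0) (hδ : δ ≤ ω ^ α) :
    fundSeq x (ω ^ α * m + δ) = ω ^ α * m + fundSeq x δ := by
  have hω : ω ^ α ≠ 0 := Ordinal.opow_ne_zero α omega0_ne_zero
  rcases lt_or_eq_of_le hδ with hlt | hEq
  · -- δ < ω ^ α
    have hCNF := CNF_opow_mul_add (m := (m : Ordinal)) (Nat.cast_ne_zero.2 hm) (Ordinal.nat_lt_omega0 m) hδ0 hlt
    obtain ⟨q, rest, hqr⟩ : ∃ q rest, Ordinal.CNF ω δ = q :: rest := by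
      rw [Ordinal.CNF.ne_zero hδ0]; exact ⟨_, _, rfl⟩
    have hLne : Ordinal.CNF ω δ ≠ [] := by rw [hqr]; simp
    obtain ⟨p, hp⟩ : ∃ p, (Ordinal.CNF ω δ).getLast? = some p :=
      ⟨(Ordinal.CNF ω δ).getLast hLne, List.getLast?_eq_getLast hLne⟩
    have hptot : (Ordinal.CNF ω (ω ^ α * m + δ)).getLast? = some p := by
      rw [hCNF, hqr, List.getLast?_cons_cons, ← hqr]
      exact hp
    by_cases h1 : p.1 = 0
    · rw [fundSeq_last_zero x hptot h1, fundSeq_last_zero x hp h1]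
      obtain ⟨s, hs⟩ := exists_succ_of_last_zero hp h1
      rw [hs, ← add_assoc, add_one_eq_succ, add_one_eq_succ, Ordinal.pred_succ,
        Ordinal.pred_succ]
    · have hδeps : δ < eps0 := hlt.trans (opow_lt_eps0 hα)
      have hpδ : p.1 < δ :=
        lt_of_le_of_lt (Ordinal.CNF.fst_le_log (List.mem_of_getLast? hp))
          (log_lt_self_of_lt_eps0 hδ0 hδeps)
      have hptotlt : p.1 < ω ^ α * m + δ := hpδ.trans_le (le_add_self)
      rw [fundSeq_last_pos x hptot h1 hptotlt, fundSeq_last_pos x hp h1 hpδ, hCNF, hqr,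
        List.dropLast_cons₂, List.cons_append, ofCNF_cons]
  · -- δ = ω ^ α
    rcases eq_or_ne α 0 with rfl | hα0
    · -- α = 0, δ = 1
      have hδ1 : δ = 1 := by rw [hEq, Ordinal.opow_zero]
      subst hδ1
      simp only [Ordinal.opow_zero, one_mul]
      have h1 : fundSeq x (1 : Ordinal) = 0 := by
        have := fundSeq_natCast x 0
        simpa using this
      have h2 : fundSeq x ((m : Ordinal) + 1) = (m : Ordinal) := by
        have := fundSeq_natCast x m
        rwa [Nat.cast_succ] at this
      rw [h1, h2, add_zero]
    · subst hEq
      have htot : ω ^ α * (m : Ordinal) + ω ^ α = ω ^ α * ((m + 1 : ℕ) : Ordinal) := by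
        rw [Nat.cast_succ, mul_add, mul_one]
      rw [htot]
      have hc : Ordinal.CNF ω (ω ^ α * ((m + 1 : ℕ) : Ordinal)) = [(α, ((m + 1 : ℕ) : Ordinal))] :=
        CNF_opow_mul (Nat.cast_ne_zero.2 (Nat.succ_ne_zero m)) (Ordinal.nat_lt_omega0 _)
      have hp : (Ordinal.CNF ω (ω ^ α * ((m + 1 : ℕ) : Ordinal))).getLast?
          = some (α, ((m + 1 : ℕ) : Ordinal)) := by rw [hc]; rfl
      have hlt2 : α < ω ^ α * ((m + 1 : ℕ) : Ordinal) := by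
        refine lt_of_lt_of_le (lt_opow_self_of_lt_eps0 hα) ?_
        calc ω ^ α = ω ^ α * 1 := (mul_one _).symm
          _ ≤ ω ^ α * ((m + 1 : ℕ) : Ordinal) := by
              apply mul_le_mul_right
              exact_mod_cast Nat.one_le_iff_ne_zero.2 (Nat.succ_ne_zero m)
      rw [fundSeq_last_pos x hp hα0 hlt2, hc, fundSeq_opow x hα0 hα]
      simp only [List.dropLast_singleton, List.nil_append, ofCNF_cons, ofCNF_nil, add_zero]
      rw [natCast_succ_sub_one]

end Part3
section Part4
open scoped Classical
open Ordinal List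

lemma iterOrd_zero (g : ℕ → ℕ) (b : ℕ) : iterOrd g 0 b = b := by
  rw [iterOrd_def]; simp

lemma iterOrd_pos (g : ℕ → ℕ) {α : Ordinal.{0}} (h0 : α ≠ 0) (b : ℕ) :
    iterOrd g α b = iterOrd g (fundSeq b α) (g b) := by
  rw [iterOrd_def, if_neg h0, if_pos (fundSeq_lt b α h0)]

lemma le_iterOrd (g : ℕ → ℕ) (hg1 : ∀ y, y + 1 ≤ g y) :
    ∀ (α : Ordinal.{0}) (b : ℕ), b ≤ iterOrd g α b := by
  intro α
  induction α using Ordinal.induction with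
  | h α IH =>
    intro b
    rcases eq_or_ne α 0 with rfl | h0
    · rw [iterOrd_zero]
    · rw [iterOrd_pos g h0 b]
      calc b ≤ g b := le_trans (Nat.le_succ b) (hg1 b)
        _ ≤ _ := IH _ (fundSeq_lt b α h0) (g b)

lemma lt_iterOrd (g : ℕ → ℕ) (hg1 : ∀ y, y + 1 ≤ g y) {α : Ordinal.{0}} (h0 : α ≠ 0) (b : ℕ) :
    b < iterOrd g α b := by
  rw [iterOrd_pos g h0 b]
  calc b < g b := hg1 b
    _ ≤ _ := le_iterOrd g hg1 _ (g b)

lemma iterOrd_add (g : ℕ → ℕ) {α : Ordinal.{0}} (hα : α < eps0) (m : ℕ) (hm : m ≠ 0) :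
    ∀ δ : Ordinal.{0}, δ ≤ ω ^ α → ∀ c : ℕ,
      iterOrd g (ω ^ α * m + δ) c = iterOrd g (ω ^ α * m) (iterOrd g δ c) := by
  intro δ
  induction δ using Ordinal.induction with
  | h δ IH =>
    intro hδ c
    rcases eq_or_ne δ 0 with rfl | hδ0
    · rw [add_zero, iterOrd_zero]
    · have htot0 : ω ^ α * m + δ ≠ 0 := by
        have : (0 : Ordinal) < δ := pos_iff_ne_zero.2 hδ0
        exact (lt_of_lt_of_le this (le_add_self)).ne'
      rw [iterOrd_pos g htot0 c, fundSeq_add c hα m hm hδ0 hδ,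
        IH _ (fundSeq_lt c δ hδ0) ((fundSeq_lt c δ hδ0).le.trans hδ) (g c),
        ← iterOrd_pos g hδ0 c]

lemma main_lemma (g : ℕ → ℕ) (hg1 : ∀ y, y + 1 ≤ g y) :
    ∀ α : Ordinal.{0}, α < eps0 → ∀ c : ℕ, 1 ≤ c → ∀ n : ℕ, 1 ≤ n →
      iterOrd g α c < iterOrd g (ω ^ α * n) c := by
  intro α
  induction α using Ordinal.induction with
  | h α IH =>
    intro hα c hc n hn
    rcases eq_or_ne α 0 with rfl | h0
    · rw [iterOrd_zero, Ordinal.opow_zero, one_mul]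
      exact lt_iterOrd g hg1 (Nat.cast_ne_zero.2 (by omega)) c
    · have h1 : iterOrd g α c < iterOrd g (ω ^ α) c := by
        rw [iterOrd_pos g h0 c, iterOrd_pos g (Ordinal.opow_ne_zero α omega0_ne_zero) c,
          fundSeq_opow c h0 hα]
        exact IH _ (fundSeq_lt c α h0) ((fundSeq_lt c α h0).trans hα) (g c)
          (by have := hg1 c; omega) c hc
      rcases eq_or_ne n 1 with rfl | hn1
      · rw [Nat.cast_one, mul_one]
        exact h1
      · have hm : n - 1 ≠ 0 := by omega
        have hsplit : (ω ^ α * (n : Ordinal) : Ordinal)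
            = ω ^ α * ((n - 1 : ℕ) : Ordinal) + ω ^ α := by
          have hn' : ((n - 1 : ℕ) : Ordinal) + 1 = (n : Ordinal) := by
            rw [← Nat.cast_succ]
            congr 1
            omega
          rw [← hn', mul_add, mul_one]
        rw [hsplit, iterOrd_add g hα (n - 1) hm (ω ^ α) le_rfl c]
        exact lt_of_lt_of_le h1 (le_iterOrd g hg1 _ _)

end Part4

/-- If `g` is monotone with `g b ≥ b+1` and `b ≥ 1`, then `g^{ω^α}(b) > g^α(b)`
for any ordinal `α` below `ε₀`. -/
theorem iterOrd_lt_iterOrd_omega_pow (g : ℕ → ℕ) (hg : Monotone g)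
    (hg1 : ∀ x, x + 1 ≤ g x) (b : ℕ) (hb : 1 ≤ b)
    (α : Ordinal.{0}) (hα : α < eps0) :
    iterOrd g α b < iterOrd g (Ordinal.omega0 ^ α) b := by
  have h := main_lemma g hg1 α hα b hb 1 le_rfl
  rwa [Nat.cast_one, mul_one] at h
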